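/- Let $A \in \mathbb{C}^{n \times n}$ be a Hermitian positive semidefinite matrix all of whose nonzero entries have modulus $1$. Then there exist matrices $L, U \in \mathbb{C}^{n \times n}$ with $L$ lower triangular and nonsingular, $U$ upper triangular, $A = LU$, and a unitary diagonal matrix $D$ (a diagonal matrix all of whose diagonal entries have modulus $1$) such that both $D^{-1} L D$ and $D^{-1} U D$ have all entries equal to $0$ or $1$. -/

import Mathlib

/-!
On its support, a positive semidefinite matrix with unimodular nonzero entries has the pattern of
a rank-one matrix of phases. If `A i i = A j j = 1` and `‖A i j‖ = 1`, then
`e i - conj (A i j) • e j` is isotropic for the form of `A`, hence lies in the kernel of `A`, so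
row `i` of `A` is `A i j` times row `j`. Thus `A i j ≠ 0` is a partial equivalence relation, and
`A = D B D⁻¹` with `B` its `0/1` matrix and `D` diagonal with unimodular entries (the phase of
each row at a representative of its class). Choosing the least element of each class as its
representative, `B = L₀ U₀`, where `U₀` keeps the rows of `B` at the representatives and `L₀` has
ones on the diagonal and at `(i, rep i)`; conjugating by `D` gives `L` and `U`.
-/

open scoped ComplexOrder Matrix ComplexConjugate

open Finset Matrix

namespace Matrix

section Representatives

variable {ι α : Type*} [LinearOrder ι] [Semiring α]

def repLower (r : ι → ι) : Matrix ι ι α :=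
  of fun i k => if k = i ∨ k = r i then 1 else 0

def repUpper (r : ι → ι) (B : Matrix ι ι α) : Matrix ι ι α :=
  of fun k j => if r k = k then B k j else 0

/-- Row `i` of the product is row `r i` of `B`: `r i` is the only fixed point of `r` in
`{i, r i}`. -/
theorem repLower_mul_repUpper [Fintype ι] {r : ι → ι} {B : Matrix ι ι α}
    (hr : ∀ i, r (r i) = r i) (hB : ∀ i, B (r i) = B i) : repLower r * repUpper r B = B := by
  ext i j
  have hsum :
      (repLower r * repUpper r B : Matrix ι ι α) i j = ∑ k ∈ {i, r i}, repUpper r B k j := by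
    rw [mul_apply]
    simp only [repLower, of_apply, ite_mul, one_mul, zero_mul, ← sum_filter]
    congr 1
    ext k
    simp
  by_cases hi : r i = i
  · rw [hsum, hi, pair_eq_singleton, sum_singleton]
    simp [repUpper, hi]
  · rw [hsum, sum_pair (Ne.symm hi)]
    simp [repUpper, hi, hr, hB]

theorem repLower_isLowerTriangular {r : ι → ι} (hr : ∀ i, r i ≤ i) :
    (repLower r : Matrix ι ι α).IsLowerTriangular := by
  intro i j (hij : i < j)
  simp only [repLower, of_apply, ite_eq_right_iff]
  rintro (rfl | rfl)
  · exact absurd hij (lt_irrefl _)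
  · exact absurd hij (not_lt.mpr (hr i))

theorem repUpper_isUpperTriangular {r : ι → ι} {B : Matrix ι ι α}
    (hB : ∀ i j, B i j ≠ 0 → r i ≤ j) : (repUpper r B).IsUpperTriangular := by
  intro i j (hji : j < i)
  simp only [repUpper, of_apply, ite_eq_right_iff]
  intro hri
  by_contra hij
  exact absurd hji (not_lt.mpr (hri ▸ hB i j hij))

theorem repLower_apply_eq_zero_or_eq_one (r : ι → ι) (i j : ι) :
    (repLower r : Matrix ι ι α) i j = 0 ∨ (repLower r : Matrix ι ι α) i j = 1 := by
  simp only [repLower, of_apply]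
  split_ifs <;> simp

theorem repUpper_apply_eq_zero_or_eq_one (r : ι → ι) {B : Matrix ι ι α}
    (hB : ∀ i j, B i j = 0 ∨ B i j = 1) (i j : ι) :
    repUpper r B i j = 0 ∨ repUpper r B i j = 1 := by
  simp only [repUpper, of_apply]
  split_ifs
  exacts [hB i j, Or.inl rfl]

end Representatives

theorem det_repLower {ι α : Type*} [LinearOrder ι] [Fintype ι] [CommRing α] {r : ι → ι}
    (hr : ∀ i, r i ≤ i) :
    (repLower r : Matrix ι ι α).det = 1 := by
  rw [det_of_isLowerTriangular _ (repLower_isLowerTriangular hr)]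
  exact prod_eq_one fun i _ => by simp [repLower]

section ClassMin

variable {ι : Type*} [Fintype ι] [LinearOrder ι] {R : ι → ι → Prop} {i j : ι}

open Classical in
noncomputable def classMin (R : ι → ι → Prop) (i : ι) : ι :=
  if h : (univ.filter (R i)).Nonempty then (univ.filter (R i)).min' h else i

theorem classMin_le_of_rel (h : R i j) : classMin R i ≤ j := by
  classical
  have hj : j ∈ univ.filter (R i) := by simpa using h
  rw [classMin, dif_pos ⟨j, hj⟩]
  exact min'_le _ _ hj

theorem rel_classMin (h : R i j) : R i (classMin R i) := by
  classical
  have hne : (univ.filter (R i)).Nonempty := ⟨j, by simpa using h⟩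
  rw [classMin, dif_pos hne]
  simpa using min'_mem _ hne

theorem classMin_of_forall_not_rel (h : ∀ j, ¬ R i j) : classMin R i = i := by
  classical
  rw [classMin, dif_neg]
  simpa [Finset.Nonempty] using h

theorem classMin_eq_of_rel (hsymm : ∀ ⦃i j⦄, R i j → R j i)
    (htrans : ∀ ⦃i j k⦄, R i j → R j k → R i k) (h : R i j) : classMin R i = classMin R j := by
  classical
  have hclass : univ.filter (R i) = univ.filter (R j) := by
    ext k
    simpa using ⟨htrans (hsymm h), htrans h⟩
  have hne : (univ.filter (R j)).Nonempty := ⟨j, by simpa using htrans (hsymm h) h⟩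
  simp only [classMin, hclass, dif_pos hne]

theorem classMin_le_self (hsymm : ∀ ⦃i j⦄, R i j → R j i)
    (htrans : ∀ ⦃i j k⦄, R i j → R j k → R i k) : classMin R i ≤ i := by
  by_cases h : ∃ j, R i j
  · obtain ⟨j, hj⟩ := h
    exact classMin_le_of_rel (htrans hj (hsymm hj))
  · rw [classMin_of_forall_not_rel (not_exists.mp h)]

theorem classMin_classMin (hsymm : ∀ ⦃i j⦄, R i j → R j i)
    (htrans : ∀ ⦃i j k⦄, R i j → R j k → R i k) : classMin R (classMin R i) = classMin R i := by
  by_cases h : ∃ j, R i j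
  · obtain ⟨j, hj⟩ := h
    exact (classMin_eq_of_rel hsymm htrans (rel_classMin hj)).symm
  · rw [classMin_of_forall_not_rel (not_exists.mp h), classMin_of_forall_not_rel (not_exists.mp h)]

end ClassMin

open Classical in
noncomputable def relMatrix {ι : Type*} (α : Type*) [Zero α] [One α] (R : ι → ι → Prop) :
    Matrix ι ι α :=
  of fun i j => if R i j then 1 else 0

theorem exists_lu_relMatrix {ι α : Type*} [Fintype ι] [LinearOrder ι] [CommRing α]
    {R : ι → ι → Prop} (hsymm : ∀ ⦃i j⦄, R i j → R j i)
    (htrans : ∀ ⦃i j k⦄, R i j → R j k → R i k) :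
    ∃ L U : Matrix ι ι α, L.IsLowerTriangular ∧ L.det = 1 ∧ U.IsUpperTriangular ∧
      relMatrix α R = L * U ∧ (∀ i j, L i j = 0 ∨ L i j = 1) ∧ (∀ i j, U i j = 0 ∨ U i j = 1) := by
  classical
  have hrow (i : ι) : relMatrix α R (classMin R i) = relMatrix α R i := by
    by_cases h : ∃ j, R i j
    · obtain ⟨j, hj⟩ := h
      have hi := rel_classMin hj
      ext k
      simp only [relMatrix, of_apply]
      exact if_congr ⟨htrans hi, htrans (hsymm hi)⟩ rfl rfl
    · rw [classMin_of_forall_not_rel (not_exists.mp h)]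
  have h01 (i j : ι) : relMatrix α R i j = 0 ∨ relMatrix α R i j = 1 := by
    simp only [relMatrix, of_apply]
    split_ifs <;> simp
  refine ⟨repLower (classMin R), repUpper (classMin R) (relMatrix α R),
    repLower_isLowerTriangular fun _ => classMin_le_self hsymm htrans,
    det_repLower fun _ => classMin_le_self hsymm htrans,
    repUpper_isUpperTriangular fun i j hij => classMin_le_of_rel ?_,
    (repLower_mul_repUpper (fun _ => classMin_classMin hsymm htrans) hrow).symm,
    repLower_apply_eq_zero_or_eq_one _, repUpper_apply_eq_zero_or_eq_one _ h01⟩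
  by_contra hR
  exact hij (if_neg hR)

theorem BlockTriangular.diagonal_mul_mul_inv {m α β : Type*} [Fintype m] [DecidableEq m]
    [CommRing α] [LinearOrder β] {M : Matrix m m α} {b : m → β} (hM : M.BlockTriangular b)
    (d : m → α) :
    (diagonal d * M * (diagonal d)⁻¹).BlockTriangular b := by
  rw [inv_diagonal]
  exact ((blockTriangular_diagonal d).mul hM).mul (blockTriangular_diagonal _)

theorem diagonal_mul_diagonal_star {n 𝕜 : Type*} [Fintype n] [DecidableEq n] [RCLike 𝕜]
    {d : n → 𝕜} (hd : ∀ i, ‖d i‖ = 1) : diagonal d * diagonal (star d) = 1 := by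
  rw [diagonal_mul_diagonal, ← diagonal_one]
  congr 1
  ext i
  simp [RCLike.mul_conj, hd]

theorem IsHermitian.apply_ne_zero_symm {n α : Type*} [AddMonoid α] [StarAddMonoid α]
    {A : Matrix n n α} (hA : A.IsHermitian) {i j : n} (hij : A i j ≠ 0) : A j i ≠ 0 := by
  rwa [← hA.apply, star_ne_zero]

namespace PosSemidef

variable {n 𝕜 : Type*} [RCLike 𝕜] {A : Matrix n n 𝕜} {i j : n}

theorem diag_eq_one_of_norm_eq_one (hA : A.PosSemidef) (hi : ‖A i i‖ = 1) : A i i = 1 := by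
  rw [← RCLike.norm_of_nonneg' hA.diag_nonneg, hi, RCLike.ofReal_one]

variable [Fintype n]

theorem apply_eq_zero_of_diag_eq_zero (hA : A.PosSemidef) (hi : A i i = 0) (j : n) :
    A i j = 0 := by
  classical
  have hker := (hA.dotProduct_mulVec_zero_iff (Pi.single i 1)).mp (by simp [hi])
  have hji : A j i = 0 := by simpa using congrFun hker j
  rw [← hA.isHermitian.apply i j, hji, star_zero]

theorem apply_eq_mul_of_norm_eq_one (hA : A.PosSemidef) (hi : A i i = 1) (hj : A j j = 1)
    (hij : ‖A i j‖ = 1) (k : n) : A i k = A i j * A j k := by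
  classical
  have hherm (p q : n) : conj (A p q) = A q p := hA.isHermitian.apply q p
  have hunit : A i j * conj (A i j) = 1 := by rw [RCLike.mul_conj, hij]; simp
  set x : n → 𝕜 := Pi.single i 1 - Pi.single j (conj (A i j))
  have hker : A *ᵥ x = 0 := (hA.dotProduct_mulVec_zero_iff x).mp (by
    simp [x, mulVec_sub, sub_dotProduct, hi, hj, ← hherm i j, hunit])
  have hki : A k i = A k j * conj (A i j) := by
    simpa [x, mulVec_sub, sub_eq_zero, mul_comm] using congrFun hker k
  simpa [hherm, mul_comm] using congrArg conj hki

theorem diag_eq_one_of_apply_ne_zero (hA : A.PosSemidef) (h : ∀ i j, A i j ≠ 0 → ‖A i j‖ = 1)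
    (hij : A i j ≠ 0) : A i i = 1 :=
  hA.diag_eq_one_of_norm_eq_one <| h i i fun hi => hij (hA.apply_eq_zero_of_diag_eq_zero hi j)

theorem apply_eq_mul_of_apply_ne_zero (hA : A.PosSemidef) (h : ∀ i j, A i j ≠ 0 → ‖A i j‖ = 1)
    (hij : A i j ≠ 0) (k : n) : A i k = A i j * A j k :=
  hA.apply_eq_mul_of_norm_eq_one (hA.diag_eq_one_of_apply_ne_zero h hij)
    (hA.diag_eq_one_of_apply_ne_zero h (hA.isHermitian.apply_ne_zero_symm hij)) (h i j hij) k

theorem apply_ne_zero_trans (hA : A.PosSemidef) (h : ∀ i j, A i j ≠ 0 → ‖A i j‖ = 1) {k : n}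
    (hij : A i j ≠ 0) (hjk : A j k ≠ 0) : A i k ≠ 0 := by
  rw [hA.apply_eq_mul_of_apply_ne_zero h hij]
  exact mul_ne_zero hij hjk

theorem exists_phase (hA : A.PosSemidef) (h : ∀ i j, A i j ≠ 0 → ‖A i j‖ = 1) :
    ∃ d : n → 𝕜, (∀ i, ‖d i‖ = 1) ∧ ∀ i j, A i j ≠ 0 → A i j = d i * conj (d j) := by
  classical
  -- `r i` depends only on the class of `i`, since related indices have equal predicates.
  let r : n → n := fun i => @Classical.epsilon n ⟨i⟩ (fun j => A i j ≠ 0)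
  refine ⟨fun i => if A i (r i) = 0 then 1 else A i (r i), fun i => ?_, fun i j hij => ?_⟩
  · dsimp only
    split_ifs with hi
    exacts [norm_one, h _ _ hi]
  have hji := hA.isHermitian.apply_ne_zero_symm hij
  have hr : r i = r j := by
    simp only [r]
    congr 1
    ext k
    exact ⟨hA.apply_ne_zero_trans h hji, hA.apply_ne_zero_trans h hij⟩
  have hir : A i (r i) ≠ 0 := Classical.epsilon_spec (p := fun k => A i k ≠ 0) ⟨j, hij⟩
  have hjr : A j (r j) ≠ 0 := Classical.epsilon_spec (p := fun k => A j k ≠ 0) ⟨i, hji⟩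
  dsimp only
  rw [if_neg hir, if_neg hjr, hr, hA.apply_eq_mul_of_apply_ne_zero h hij (r j), mul_assoc,
    RCLike.mul_conj, h j _ hjr]
  simp

theorem exists_eq_diagonal_mul_relMatrix_mul_inv [DecidableEq n] (hA : A.PosSemidef)
    (h : ∀ i j, A i j ≠ 0 → ‖A i j‖ = 1) :
    ∃ d : n → 𝕜, (∀ i, ‖d i‖ = 1) ∧
      A = diagonal d * relMatrix 𝕜 (fun i j => A i j ≠ 0) * (diagonal d)⁻¹ := by
  obtain ⟨d, hd, hphase⟩ := hA.exists_phase h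
  refine ⟨d, hd, ?_⟩
  rw [inv_eq_right_inv (diagonal_mul_diagonal_star hd)]
  ext i j
  by_cases hij : A i j = 0
  · simp [relMatrix, hij]
  · simp [relMatrix, hphase i j hij]

end PosSemidef

end Matrix

/-- A Hermitian positive semidefinite matrix whose nonzero entries all have modulus `1`
admits an LU factorization `A = L U` with `L` lower triangular and nonsingular, `U`
upper triangular, such that `D⁻¹ L D` and `D⁻¹ U D` are `(0,1)`-matrices for some
unitary diagonal matrix `D`. -/
theorem stmt8 (n : ℕ) (A : Matrix (Fin n) (Fin n) ℂ) (hA : A.PosSemidef)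
    (h : ∀ i j, A i j ≠ 0 → ‖A i j‖ = 1) :
    ∃ L U : Matrix (Fin n) (Fin n) ℂ,
      (∀ i j : Fin n, i < j → L i j = 0) ∧ IsUnit L.det ∧
      (∀ i j : Fin n, j < i → U i j = 0) ∧ A = L * U ∧
      ∃ d : Fin n → ℂ, (∀ i, ‖d i‖ = 1) ∧
        (∀ i j, ((Matrix.diagonal d)⁻¹ * L * Matrix.diagonal d) i j = 0 ∨
                ((Matrix.diagonal d)⁻¹ * L * Matrix.diagonal d) i j = 1) ∧
        (∀ i j, ((Matrix.diagonal d)⁻¹ * U * Matrix.diagonal d) i j = 0 ∨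
                ((Matrix.diagonal d)⁻¹ * U * Matrix.diagonal d) i j = 1) := by
  obtain ⟨d, hd, hA_eq⟩ := hA.exists_eq_diagonal_mul_relMatrix_mul_inv h
  obtain ⟨L, U, hL, hLdet, hU, hLU, hL01, hU01⟩ := exists_lu_relMatrix (α := ℂ)
    (R := fun i j => A i j ≠ 0) (fun _ _ => hA.isHermitian.apply_ne_zero_symm)
    (fun _ _ _ => hA.apply_ne_zero_trans h)
  have hD : IsUnit (diagonal d).det := isUnit_det_of_right_inverse (diagonal_mul_diagonal_star hd)
  have hconj (M : Matrix (Fin n) (Fin n) ℂ) :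
      (diagonal d)⁻¹ * (diagonal d * M * (diagonal d)⁻¹) * diagonal d = M := by
    rw [Matrix.mul_assoc, nonsing_inv_mul_cancel_right _ _ hD, nonsing_inv_mul_cancel_left _ _ hD]
  refine ⟨diagonal d * L * (diagonal d)⁻¹, diagonal d * U * (diagonal d)⁻¹,
    fun i j hij => hL.diagonal_mul_mul_inv d hij, ?_, fun i j hij => hU.diagonal_mul_mul_inv d hij,
    ?_, d, hd, by simpa only [hconj] using hL01, by simpa only [hconj] using hU01⟩
  · rw [det_conj ((isUnit_iff_isUnit_det _).mpr hD), hLdet]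
    exact isUnit_one
  · rw [hA_eq, hLU]
    simp only [Matrix.mul_assoc, nonsing_inv_mul_cancel_left _ _ hD]
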